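/- During the zero forcing process, each vertex performs at most one force; consequently, if V_ℓ is a zero forcing set of G = (V,E), the set of forcing pairs (v forces u) forms a set of |V| − |V_ℓ| edges whose components are vertex-disjoint paths, each path originating at a vertex of V_ℓ. -/

import Mathlib

/-- A set `B` of black vertices is closed under the zero-forcing color change rule. -/
def ZFClosed {V : Type*} (G : SimpleGraph V) (B : Set V) : Prop :=
  ∀ v ∈ B, ∀ u, G.Adj v u → u ∉ B → ∃ w, G.Adj v w ∧ w ∉ B ∧ w ≠ u

/-- The derived set of the zero forcing process started from `S`. -/
def dset {V : Type*} (G : SimpleGraph V) (S : Set V) : Set V :=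
  ⋂₀ {B | S ⊆ B ∧ ZFClosed G B}

/-- `ValidChron G B L C` : starting from black set `B`, the chronological list `L`
of forcing pairs `(v, u)` (a black vertex `v` with unique white neighbor `u` forces `u`)
is a valid sequence of forces ending with black set `C`. -/
inductive ValidChron {V : Type*} (G : SimpleGraph V) : Set V → List (V × V) → Set V → Prop
  | nil (B : Set V) : ValidChron G B [] B
  | cons (B : Set V) (v u : V) (L : List (V × V)) (C : Set V)
      (hv : v ∈ B) (hu : u ∉ B) (hadj : G.Adj v u)
      (huniq : ∀ w, G.Adj v w → w ∉ B → w = u)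
      (htail : ValidChron G (insert u B) L C) :
      ValidChron G B ((v, u) :: L) C

/-- The forcing subgraph determined by the forcing pairs of a chronology. -/
def forcingGraph {V : Type*} (L : List (V × V)) : SimpleGraph V :=
  SimpleGraph.fromEdgeSet {e | ∃ p ∈ L, e = s(p.1, p.2)}

section Aux
variable {V : Type*} {G : SimpleGraph V}

lemma vc_snd_not {B C : Set V} {L : List (V × V)} (h : ValidChron G B L C) :
    ∀ p ∈ L, p.2 ∉ B := by
  induction h with
  | nil => simp
  | cons B v u L C hv hu hadj huniq htail ih =>
    intro p hp
    rcases List.mem_cons.1 hp with rfl | hp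
    · exact hu
    · exact fun hB => ih p hp (Set.mem_insert_of_mem _ hB)

lemma vc_snd_nodup {B C : Set V} {L : List (V × V)} (h : ValidChron G B L C) :
    (L.map Prod.snd).Nodup := by
  induction h with
  | nil => simp
  | cons B v u L C hv hu hadj huniq htail ih =>
    simp only [List.map_cons, List.nodup_cons]
    refine ⟨?_, ih⟩
    intro hmem
    rcases List.mem_map.1 hmem with ⟨p, hp, hpe⟩
    exact vc_snd_not htail p hp (hpe ▸ Set.mem_insert _ _)

lemma vc_fst_no_white {B C : Set V} {L : List (V × V)} (h : ValidChron G B L C)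
    {v : V} (hall : ∀ w, G.Adj v w → w ∈ B) : v ∉ L.map Prod.fst := by
  induction h with
  | nil => simp
  | cons B v' u L C hv hu hadj huniq htail ih =>
    simp only [List.map_cons, List.mem_cons]
    rintro (rfl | hmem)
    · exact hu (hall u hadj)
    · exact ih (fun w hw => Set.mem_insert_of_mem _ (hall w hw)) hmem

lemma vc_fst_nodup {B C : Set V} {L : List (V × V)} (h : ValidChron G B L C) :
    (L.map Prod.fst).Nodup := by
  induction h with
  | nil => simp
  | cons B v u L C hv hu hadj huniq htail ih =>
    simp only [List.map_cons, List.nodup_cons]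
    refine ⟨?_, ih⟩
    exact vc_fst_no_white htail (fun w hw => by
      by_contra hnw
      rcases (show w ∈ insert u B → False from hnw) with _
      all_goals
        have := huniq w hw
        by_cases hwB : w ∈ B
        · exact hnw (Set.mem_insert_of_mem _ hwB)
        · exact hnw (this hwB ▸ Set.mem_insert _ _))

lemma vc_union {B C : Set V} {L : List (V × V)} (h : ValidChron G B L C) :
    C = B ∪ {x | x ∈ L.map Prod.snd} := by
  induction h with
  | nil => simp
  | cons B v u L C hv hu hadj huniq htail ih =>
    rw [ih]
    ext x
    simp [Set.mem_insert_iff, or_assoc]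
    tauto

lemma vc_origin {B C : Set V} {L : List (V × V)} (h : ValidChron G B L C) :
    ∀ p ∈ L, p.1 ∈ B ∨ ∃ q ∈ L, q.2 = p.1 := by
  induction h with
  | nil => simp
  | cons B v u L C hv hu hadj huniq htail ih =>
    intro p hp
    rcases List.mem_cons.1 hp with rfl | hp
    · exact Or.inl hv
    · rcases ih p hp with hB | ⟨q, hq, hqe⟩
      · rcases Set.mem_insert_iff.1 hB with heq | hB
        · exact Or.inr ⟨(v, u), List.mem_cons_self, heq.symm⟩
        · exact Or.inl hB
      · exact Or.inr ⟨q, List.mem_cons_of_mem _ hq, hqe⟩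

end Aux

/-- Each vertex performs at most one force and is forced at most once; for a complete
zero forcing process from a zero forcing set $V_\ell$ the forcing pairs form
$|V| - |V_\ell|$ edges whose components are vertex-disjoint paths, each originating
at a vertex of $V_\ell$ (every forcing vertex is a leader or was itself forced). -/
theorem forcing_pairs_structure {V : Type*} [Fintype V] (G : SimpleGraph V)
    (S : Set V) (L : List (V × V)) (h : ValidChron G S L Set.univ) :
    (L.map Prod.fst).Nodup ∧
    (L.map Prod.snd).Nodup ∧
    (∀ p ∈ L, p.2 ∉ S) ∧
    L.length = Fintype.card V - S.ncard ∧
    (∀ p ∈ L, p.1 ∈ S ∨ ∃ q ∈ L, q.2 = p.1) := by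
  refine ⟨vc_fst_nodup h, vc_snd_nodup h, vc_snd_not h, ?_, vc_origin h⟩
  classical
  have huniv := vc_union h
  set T : Set V := {x | x ∈ L.map Prod.snd} with hT
  have hdisj : Disjoint S T := by
    rw [Set.disjoint_right]
    intro x hx hxS
    rcases List.mem_map.1 hx with ⟨p, hp, hpe⟩
    exact vc_snd_not h p hp (hpe ▸ hxS)
  have hTcard : T.ncard = L.length := by
    have : T = ↑(L.map Prod.snd).toFinset := by
      ext x; simp [hT]
    rw [this, Set.ncard_coe_finset, List.toFinset_card_of_nodup (vc_snd_nodup h),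
      List.length_map]
  have hcard : Fintype.card V = S.ncard + L.length := by
    have h2 := congrArg Set.ncard huniv
    rw [Set.ncard_univ, Nat.card_eq_fintype_card,
      Set.ncard_union_eq hdisj (Set.toFinite _) (Set.toFinite _), hTcard] at h2
    exact h2
  omega
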